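/- Let X be a Polish space (separable, completely metrizable) with its Borel σ-algebra, let C ≥ 1 and c ≥ 0, and let (μ_n), (ν_n) be sequences of Borel probability measures on X converging weakly to Borel probability measures μ and ν respectively. Assume that for every n: (a) μ_n(A) ≤ C·ν_n(A) for every Borel set A, and (b) μ_n ≪ ν_n and ∫_X log(dμ_n/dν_n) dν_n ≥ −c, where the integrand is bounded above by log C so the integral is well defined with values in [−∞, ∞). Then μ ≪ ν and ∫_X log(dμ/dν) dν ≥ −c; in particular ν ≪ μ, so μ and ν are mutually absolutely continuous. -/

import Mathlib

/-!
Domination `μₙ ≤ C • νₙ` passes to weak limits: test it against bounded continuous functions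
decreasing to the indicator of a closed set, then use regularity of finite measures on a
metrizable space. Hence `μ ≪ ν` with `dμ/dν ≤ C`.

The entropy bound is carried through the limit in its Donsker–Varadhan form
`∫ φ dν ≤ log ∫ exp φ dμ + c`. At level `n` this follows from Jensen's inequality for `exp`
applied to `φ + log (dμₙ/dνₙ)`; for bounded continuous `φ` it passes to the weak limit, and it
extends to bounded measurable `φ` by a.e. approximation and dominated convergence. Testing it
on `φ = -log` of the density clipped to `[exp (-n), C]`, for which `∫ exp φ dμ ≤ 1`, and
letting `n → ∞` by monotone convergence, shows at once that `dμ/dν > 0` `ν`-a.e. (which gives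
`ν ≪ μ`) and that `∫ (log C - log (dμ/dν)) dν ≤ log C + c`.
-/

open MeasureTheory Filter

/-- The relative entropy integrand `log C - log (dμ/dν)`, as an `ℝ≥0∞`-valued function
(the integrand `log(dμ/dν)` is bounded above by `log C`, so this is the nonnegative
version of its negation shifted by `log C`). -/
noncomputable def relEntIntegrand {X : Type*} [MeasurableSpace X]
    (C : ℝ) (μ ν : Measure X) (x : X) : ENNReal :=
  ENNReal.ofReal (Real.log C - Real.log (μ.rnDeriv ν x).toReal)

/-- The statement `μ ≪ ν` and `∫ log(dμ/dν) dν ≥ -c`, for a probability measure `ν` and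
`μ(A) ≤ C·ν(A)` (so that the integrand `log(dμ/dν)` is bounded above by `log C` and the
integral is well defined with values in `[-∞, ∞)`): the density `dμ/dν` is `ν`-a.e.
nonvanishing (otherwise the integral would be `-∞`) and
`∫ (log C - log(dμ/dν)) dν ≤ log C + c`. -/
def LogDensityIntegralGe {X : Type*} [MeasurableSpace X]
    (C c : ℝ) (μ ν : Measure X) : Prop :=
  μ ≪ ν ∧ (∀ᵐ x ∂ν, μ.rnDeriv ν x ≠ 0) ∧
    ∫⁻ x, relEntIntegrand C μ ν x ∂ν ≤ ENNReal.ofReal (Real.log C + c)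

open scoped Topology ENNReal NNReal BoundedContinuousFunction

namespace MeasureTheory

variable {X : Type*} [MeasurableSpace X]

theorem Measure.le_of_forall_isClosed_le [TopologicalSpace X] {μ ν : Measure X}
    [μ.WeaklyRegular] [ν.OuterRegular] (h : ∀ F, IsClosed F → μ F ≤ ν F) : μ ≤ ν := by
  refine Measure.le_iff'.2 fun s => ?_
  rw [s.measure_eq_iInf_isOpen ν]
  refine le_iInf₂ fun U hsU => le_iInf fun hU => (μ.mono hsU).trans ?_
  show μ U ≤ ν U
  rw [hU.measure_eq_iSup_isClosed μ]
  exact iSup₂_le fun F hFU => iSup_le fun hF => (h F hF).trans (ν.mono hFU)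

theorem ProbabilityMeasure.measure_isClosed_le_smul_of_tendsto [TopologicalSpace X]
    [OpensMeasurableSpace X] [HasOuterApproxClosed X] {ι : Type*} {L : Filter ι} [L.NeBot]
    {μs νs : ι → ProbabilityMeasure X} {μ ν : ProbabilityMeasure X}
    (hμ : Tendsto μs L (𝓝 μ)) (hν : Tendsto νs L (𝓝 ν)) {a : ℝ≥0}
    (h : ∀ i, (μs i : Measure X) ≤ a • (νs i : Measure X)) {F : Set X} (hF : IsClosed F) :
    (μ : Measure X) F ≤ a * (ν : Measure X) F := by
  refine le_of_tendsto_of_tendsto' (HasOuterApproxClosed.tendsto_lintegral_apprSeq hF μ)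
    (ENNReal.Tendsto.const_mul (HasOuterApproxClosed.tendsto_lintegral_apprSeq hF ν)
      (.inr ENNReal.coe_ne_top))
    fun n => le_of_tendsto_of_tendsto' (tendsto_iff_forall_lintegral_tendsto.1 hμ _)
      (ENNReal.Tendsto.const_mul (tendsto_iff_forall_lintegral_tendsto.1 hν _)
        (.inr ENNReal.coe_ne_top))
      fun i => ?_
  calc ∫⁻ x, hF.apprSeq n x ∂(μs i : Measure X)
      ≤ ∫⁻ x, hF.apprSeq n x ∂(a • (νs i : Measure X)) := lintegral_mono' (h i) le_rfl
    _ = a * ∫⁻ x, hF.apprSeq n x ∂(νs i : Measure X) := by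
      rw [lintegral_smul_measure, ENNReal.smul_def, smul_eq_mul]

theorem ProbabilityMeasure.le_smul_of_tendsto [TopologicalSpace X]
    [TopologicalSpace.PseudoMetrizableSpace X] [BorelSpace X] {ι : Type*} {L : Filter ι} [L.NeBot]
    {μs νs : ι → ProbabilityMeasure X} {μ ν : ProbabilityMeasure X}
    (hμ : Tendsto μs L (𝓝 μ)) (hν : Tendsto νs L (𝓝 ν)) {a : ℝ≥0}
    (h : ∀ i, (μs i : Measure X) ≤ a • (νs i : Measure X)) :
    (μ : Measure X) ≤ a • (ν : Measure X) :=
  Measure.le_of_forall_isClosed_le fun _ hF =>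
    measure_isClosed_le_smul_of_tendsto hμ hν h hF

theorem Measure.toReal_rnDeriv_le_of_le_smul {μ ν : Measure X} [SigmaFinite ν] {a : ℝ≥0}
    (h : μ ≤ a • ν) : ∀ᵐ x ∂ν, (μ.rnDeriv ν x).toReal ≤ a := by
  have : μ.rnDeriv ν ≤ᵐ[ν] fun _ => (a : ℝ≥0∞) := by
    refine ae_le_of_forall_setLIntegral_le_of_sigmaFinite (μ.measurable_rnDeriv ν)
      fun s hs _ => ?_
    rw [setLIntegral_const]
    exact (Measure.setLIntegral_rnDeriv_le s).trans (h s)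
  filter_upwards [this] with x hx
  simpa using ENNReal.toReal_mono ENNReal.coe_ne_top hx

theorem integrable_exp_of_norm_le {μ : Measure X} [IsFiniteMeasure μ] {φ : X → ℝ}
    (hφ : AEStronglyMeasurable φ μ) {B : ℝ} (hB : ∀ x, ‖φ x‖ ≤ B) :
    Integrable (fun x => Real.exp (φ x)) μ :=
  .of_bound hφ.aemeasurable.exp.aestronglyMeasurable (Real.exp B) <| ae_of_all _ fun x => by
    simpa using Real.exp_le_exp.2 ((Real.le_norm_self _).trans (hB x))

theorem integral_add_integral_log_rnDeriv_le {μ ν : Measure X} [IsFiniteMeasure μ]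
    [IsProbabilityMeasure ν] (hμν : μ ≪ ν) (hpos : ∀ᵐ x ∂ν, 0 < (μ.rnDeriv ν x).toReal)
    (hlog : Integrable (fun x => Real.log (μ.rnDeriv ν x).toReal) ν) {φ : X → ℝ}
    (hφ : Integrable φ ν) (hexp : Integrable (fun x => Real.exp (φ x)) μ) :
    ∫ x, φ x ∂ν + ∫ x, Real.log (μ.rnDeriv ν x).toReal ∂ν
      ≤ Real.log (∫ x, Real.exp (φ x) ∂μ) := by
  have hexp_eq : (fun x => Real.exp (φ x + Real.log (μ.rnDeriv ν x).toReal))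
      =ᵐ[ν] fun x => (μ.rnDeriv ν x).toReal • Real.exp (φ x) := by
    filter_upwards [hpos] with x hx
    rw [Real.exp_add, Real.exp_log hx, smul_eq_mul, mul_comm]
  have hjensen := convexOn_exp.map_integral_le Real.continuous_exp.continuousOn isClosed_univ
    (ae_of_all _ fun _ => Set.mem_univ _) (hφ.add hlog)
    (((integrable_rnDeriv_smul_iff hμν).2 hexp).congr hexp_eq.symm)
  simp only [Pi.add_apply] at hjensen
  rw [integral_congr_ae hexp_eq, integral_rnDeriv_smul hμν, integral_add hφ hlog] at hjensen
  exact (Real.le_log_iff_exp_le (lt_of_lt_of_le (Real.exp_pos _) hjensen)).2 hjensen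

theorem ProbabilityMeasure.integral_le_log_integral_exp_add_of_tendsto [TopologicalSpace X]
    [OpensMeasurableSpace X] {ι : Type*} {L : Filter ι} [L.NeBot]
    {μs νs : ι → ProbabilityMeasure X} {μ ν : ProbabilityMeasure X}
    (hμ : Tendsto μs L (𝓝 μ)) (hν : Tendsto νs L (𝓝 ν)) {c : ℝ} (φ : X →ᵇ ℝ)
    (h : ∀ i, ∫ x, φ x ∂(νs i : Measure X)
      ≤ Real.log (∫ x, Real.exp (φ x) ∂(μs i : Measure X)) + c) :
    ∫ x, φ x ∂(ν : Measure X) ≤ Real.log (∫ x, Real.exp (φ x) ∂(μ : Measure X)) + c := by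
  let expφ : X →ᵇ ℝ := .ofNormedAddCommGroup (fun x => Real.exp (φ x)) (by fun_prop)
    (Real.exp ‖φ‖) fun x => by
      simpa using Real.exp_le_exp.2 ((Real.le_norm_self _).trans (φ.norm_coe_le_norm x))
  have hpos : 0 < ∫ x, Real.exp (φ x) ∂(μ : Measure X) :=
    integral_exp_pos (expφ.integrable _)
  exact le_of_tendsto_of_tendsto' (tendsto_iff_forall_integral_tendsto.1 hν φ)
    (((tendsto_iff_forall_integral_tendsto.1 hμ expφ).log hpos.ne').add_const c) h

theorem exists_seq_boundedContinuous_tendsto_ae [TopologicalSpace X] [NormalSpace X]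
    [BorelSpace X] (ρ : Measure X) [IsFiniteMeasure ρ] [ρ.WeaklyRegular] {φ : X → ℝ}
    (hφ : AEStronglyMeasurable φ ρ) {B : ℝ} (hB : ∀ x, ‖φ x‖ ≤ B) :
    ∃ ψ : ℕ → X →ᵇ ℝ, (∀ n x, ‖ψ n x‖ ≤ B) ∧
      ∀ᵐ x ∂ρ, Tendsto (fun n => ψ n x) atTop (𝓝 (φ x)) := by
  have hφp : MemLp φ 1 ρ := memLp_one_iff_integrable.2 (.of_bound hφ B (ae_of_all _ hB))
  choose g hg _ using fun n : ℕ =>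
    hφp.exists_boundedContinuous_eLpNorm_sub_le ENNReal.one_ne_top
      (ENNReal.inv_ne_zero.2 (ENNReal.natCast_ne_top n))
  have hmeas : TendstoInMeasure ρ (fun n => g n) atTop φ := by
    refine tendstoInMeasure_of_tendsto_eLpNorm one_ne_zero
      (fun n => (g n).continuous.aestronglyMeasurable) hφ ?_
    refine tendsto_of_tendsto_of_tendsto_of_le_of_le tendsto_const_nhds
      ENNReal.tendsto_inv_nat_nhds_zero (fun _ => zero_le) fun n => ?_
    rw [eLpNorm_sub_comm]
    exact hg n
  obtain ⟨ns, -, hns⟩ := hmeas.exists_seq_tendsto_ae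
  have hclamp : Continuous fun t : ℝ => max (-B) (min B t) := by fun_prop
  have hB0 (x : X) : 0 ≤ B := (norm_nonneg _).trans (hB x)
  have hclamp_norm (x : X) (t : ℝ) : ‖max (-B) (min B t)‖ ≤ B :=
    abs_le.2 ⟨le_max_left _ _, max_le (by linarith [hB0 x]) (min_le_left _ _)⟩
  refine ⟨fun n => .ofNormedAddCommGroup (fun x => max (-B) (min B (g (ns n) x)))
      (hclamp.comp (g (ns n)).continuous) B fun x => hclamp_norm x _, fun n x => hclamp_norm x _,
    hns.mono fun x hx => ?_⟩
  have hφx := abs_le.1 ((Real.norm_eq_abs _).symm ▸ hB x)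
  simpa [Function.comp_def, min_eq_right hφx.2, max_eq_right hφx.1] using
    (hclamp.tendsto (φ x)).comp hx

theorem integral_le_log_integral_exp_add_of_tendsto_ae {μ ν : Measure X}
    [IsProbabilityMeasure μ] [IsProbabilityMeasure ν] {ψ : ℕ → X → ℝ} {φ : X → ℝ} {B c : ℝ}
    (hψ : ∀ n, Measurable (ψ n)) (hφ : Measurable φ) (hψB : ∀ n x, ‖ψ n x‖ ≤ B)
    (hφB : ∀ x, ‖φ x‖ ≤ B) (hψμ : ∀ᵐ x ∂μ, Tendsto (fun n => ψ n x) atTop (𝓝 (φ x)))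
    (hψν : ∀ᵐ x ∂ν, Tendsto (fun n => ψ n x) atTop (𝓝 (φ x)))
    (h : ∀ n, ∫ x, ψ n x ∂ν ≤ Real.log (∫ x, Real.exp (ψ n x) ∂μ) + c) :
    ∫ x, φ x ∂ν ≤ Real.log (∫ x, Real.exp (φ x) ∂μ) + c := by
  have hν : Tendsto (fun n => ∫ x, ψ n x ∂ν) atTop (𝓝 (∫ x, φ x ∂ν)) :=
    tendsto_integral_of_dominated_convergence (fun _ => B)
      (fun n => (hψ n).aestronglyMeasurable) (integrable_const B)
      (fun n => ae_of_all _ (hψB n)) hψν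
  have hμ : Tendsto (fun n => ∫ x, Real.exp (ψ n x) ∂μ) atTop
      (𝓝 (∫ x, Real.exp (φ x) ∂μ)) := by
    refine tendsto_integral_of_dominated_convergence (fun _ => Real.exp B)
      (fun n => (hψ n).exp.aestronglyMeasurable) (integrable_const _)
      (fun n => ae_of_all _ fun x => ?_)
      (hψμ.mono fun x hx => (Real.continuous_exp.tendsto _).comp hx)
    simpa using Real.exp_le_exp.2 ((Real.le_norm_self _).trans (hψB n x))
  have hpos := integral_exp_pos (integrable_exp_of_norm_le hφ.aestronglyMeasurable hφB (μ := μ))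
  exact le_of_tendsto_of_tendsto' hν ((hμ.log hpos.ne').add_const c) h

theorem integral_le_log_integral_exp_add_of_forall_boundedContinuous [TopologicalSpace X]
    [NormalSpace X] [BorelSpace X] {μ ν : Measure X} [IsProbabilityMeasure μ]
    [IsProbabilityMeasure ν] [(μ + ν).WeaklyRegular] {c : ℝ}
    (h : ∀ ψ : X →ᵇ ℝ, ∫ x, ψ x ∂ν ≤ Real.log (∫ x, Real.exp (ψ x) ∂μ) + c)
    {φ : X → ℝ} (hφ : Measurable φ) {B : ℝ} (hB : ∀ x, ‖φ x‖ ≤ B) :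
    ∫ x, φ x ∂ν ≤ Real.log (∫ x, Real.exp (φ x) ∂μ) + c := by
  obtain ⟨ψ, hψB, hψ⟩ :=
    exists_seq_boundedContinuous_tendsto_ae (μ + ν) hφ.aestronglyMeasurable hB
  rw [ae_add_measure_iff] at hψ
  exact integral_le_log_integral_exp_add_of_tendsto_ae (fun n => (ψ n).continuous.measurable)
    hφ hψB hB hψ.1 hψ.2 fun n => h (ψ n)

end MeasureTheory

section

variable {X : Type*} [MeasurableSpace X]

theorem LogDensityIntegralGe.integral_le_log_integral_exp_add {C c : ℝ} {μ ν : Measure X}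
    [IsFiniteMeasure μ] [IsProbabilityMeasure ν] (h : LogDensityIntegralGe C c μ ν)
    (hCc : 0 ≤ Real.log C + c) (hfC : ∀ᵐ x ∂ν, (μ.rnDeriv ν x).toReal ≤ C) {φ : X → ℝ}
    (hφ : Integrable φ ν) (hexp : Integrable (fun x => Real.exp (φ x)) μ) :
    ∫ x, φ x ∂ν ≤ Real.log (∫ x, Real.exp (φ x) ∂μ) + c := by
  obtain ⟨hμν, hne, hint⟩ := h
  have hpos : ∀ᵐ x ∂ν, 0 < (μ.rnDeriv ν x).toReal := by
    filter_upwards [hne, μ.rnDeriv_lt_top ν] with x h0 htop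
    exact ENNReal.toReal_pos h0 htop.ne
  set g : X → ℝ := fun x => Real.log C - Real.log (μ.rnDeriv ν x).toReal with hg
  have hg0 : 0 ≤ᵐ[ν] g := by
    filter_upwards [hpos, hfC] with x h0 hC
    exact sub_nonneg.2 (Real.log_le_log h0 hC)
  have hgi : Integrable g ν :=
    ⟨(measurable_const.sub (μ.measurable_rnDeriv ν).ennreal_toReal.log).aestronglyMeasurable,
      (hasFiniteIntegral_iff_ofReal hg0).2 (hint.trans_lt ENNReal.ofReal_lt_top)⟩
  have hg_le : ∫ x, g x ∂ν ≤ Real.log C + c := by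
    rw [← ENNReal.ofReal_le_ofReal_iff hCc, ofReal_integral_eq_lintegral_ofReal hgi hg0]
    exact hint
  have hlog : Integrable (fun x => Real.log (μ.rnDeriv ν x).toReal) ν := by
    refine ((integrable_const (Real.log C)).sub hgi).congr (ae_of_all _ fun x => ?_)
    simp [hg]
  have hg_eq : ∫ x, g x ∂ν = Real.log C - ∫ x, Real.log (μ.rnDeriv ν x).toReal ∂ν := by
    simp [hg, integral_sub (integrable_const _) hlog]
  linarith [integral_add_integral_log_rnDeriv_le hμν hpos hlog hφ hexp]

noncomputable def truncatedRnDeriv (C : ℝ) (μ ν : Measure X) (n : ℕ) (x : X) : ℝ :=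
  max (Real.exp (-n)) (min C (μ.rnDeriv ν x).toReal)

variable {C : ℝ} {μ ν : Measure X}

theorem measurable_truncatedRnDeriv (n : ℕ) : Measurable (truncatedRnDeriv C μ ν n) :=
  measurable_const.max (measurable_const.min (μ.measurable_rnDeriv ν).ennreal_toReal)

theorem truncatedRnDeriv_pos (n : ℕ) (x : X) : 0 < truncatedRnDeriv C μ ν n x :=
  (Real.exp_pos _).trans_le (le_max_left _ _)

theorem truncatedRnDeriv_le (hC : 1 ≤ C) (n : ℕ) (x : X) : truncatedRnDeriv C μ ν n x ≤ C :=
  max_le ((Real.exp_le_one_iff.2 (by simp)).trans hC) (min_le_left _ _)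

theorem truncatedRnDeriv_antitone (x : X) : Antitone fun n => truncatedRnDeriv C μ ν n x :=
  fun _ _ hmn => max_le_max (Real.exp_le_exp.2 (by simpa using hmn)) le_rfl

theorem truncatedRnDeriv_of_toReal_rnDeriv_eq_zero (hC : 0 ≤ C) {x : X}
    (hx : (μ.rnDeriv ν x).toReal = 0) (n : ℕ) : truncatedRnDeriv C μ ν n x = Real.exp (-n) := by
  simp [truncatedRnDeriv, hx, hC, (Real.exp_pos _).le]

theorem truncatedRnDeriv_eq_toReal_rnDeriv {x : X} (hxC : (μ.rnDeriv ν x).toReal ≤ C) {n : ℕ}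
    (hn : Real.exp (-n) ≤ (μ.rnDeriv ν x).toReal) :
    truncatedRnDeriv C μ ν n x = (μ.rnDeriv ν x).toReal := by
  simp [truncatedRnDeriv, hxC, hn]

theorem integral_inv_truncatedRnDeriv_le_one [IsFiniteMeasure μ] [IsProbabilityMeasure ν]
    (hμν : μ ≪ ν) (hfC : ∀ᵐ x ∂ν, (μ.rnDeriv ν x).toReal ≤ C) (n : ℕ) :
    ∫ x, (truncatedRnDeriv C μ ν n x)⁻¹ ∂μ ≤ 1 := by
  rw [← integral_rnDeriv_smul hμν]
  have hnonneg (x : X) : 0 ≤ (μ.rnDeriv ν x).toReal • (truncatedRnDeriv C μ ν n x)⁻¹ :=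
    smul_nonneg ENNReal.toReal_nonneg (inv_nonneg.2 (truncatedRnDeriv_pos n x).le)
  refine (integral_mono_of_nonneg (ae_of_all _ hnonneg) (integrable_const 1) ?_).trans_eq
    (by simp)
  filter_upwards [hfC] with x hx
  rw [smul_eq_mul, mul_inv_le_iff₀ (truncatedRnDeriv_pos n x), one_mul]
  exact le_max_of_le_right (le_min hx le_rfl)

theorem lintegral_log_sub_log_truncatedRnDeriv_le [IsProbabilityMeasure μ]
    [IsProbabilityMeasure ν] {c : ℝ} (hC : 1 ≤ C) (hμν : μ ≪ ν)
    (hfC : ∀ᵐ x ∂ν, (μ.rnDeriv ν x).toReal ≤ C)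
    (hDV : ∀ φ : X → ℝ, Measurable φ → ∀ B, (∀ x, ‖φ x‖ ≤ B) →
      ∫ x, φ x ∂ν ≤ Real.log (∫ x, Real.exp (φ x) ∂μ) + c) (n : ℕ) :
    ∫⁻ x, ENNReal.ofReal (Real.log C - Real.log (truncatedRnDeriv C μ ν n x)) ∂ν
      ≤ ENNReal.ofReal (Real.log C + c) := by
  let φ : X → ℝ := fun x => -Real.log (truncatedRnDeriv C μ ν n x)
  have hφm : Measurable φ := (measurable_truncatedRnDeriv n).log.neg
  have hφ_le_n (x : X) : φ x ≤ n :=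
    neg_le.2 ((Real.le_log_iff_exp_le (truncatedRnDeriv_pos n x)).2 (le_max_left _ _))
  have hφ_ge (x : X) : -Real.log C ≤ φ x :=
    neg_le_neg (Real.log_le_log (truncatedRnDeriv_pos n x) (truncatedRnDeriv_le hC n x))
  have hφB (x : X) : ‖φ x‖ ≤ n + Real.log C := by
    rw [Real.norm_eq_abs, abs_le]
    constructor <;> linarith [hφ_le_n x, hφ_ge x, Real.log_nonneg hC]
  have hφi : Integrable φ ν := .of_bound hφm.aestronglyMeasurable _ (ae_of_all _ hφB)
  have hCφi : Integrable (fun x => Real.log C + φ x) ν := (integrable_const _).add hφi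
  have hexp : ∫ x, Real.exp (φ x) ∂μ ≤ 1 := by
    simpa [φ, Real.exp_neg, Real.exp_log (truncatedRnDeriv_pos n _)] using
      integral_inv_truncatedRnDeriv_le_one hμν hfC n
  have hφ_le : ∫ x, φ x ∂ν ≤ c := by
    linarith [hDV φ hφm _ hφB, Real.log_nonpos (integral_nonneg fun x => (Real.exp_pos _).le) hexp]
  have hnonneg : 0 ≤ᵐ[ν] fun x => Real.log C + φ x :=
    ae_of_all _ fun x => show 0 ≤ Real.log C + φ x by linarith [hφ_ge x]
  calc ∫⁻ x, ENNReal.ofReal (Real.log C - Real.log (truncatedRnDeriv C μ ν n x)) ∂ν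
      = ENNReal.ofReal (∫ x, (Real.log C + φ x) ∂ν) := by
        rw [ofReal_integral_eq_lintegral_ofReal hCφi hnonneg]
        simp [φ, sub_eq_add_neg]
    _ ≤ ENNReal.ofReal (Real.log C + c) := by
        rw [integral_add (integrable_const _) hφi]
        exact ENNReal.ofReal_le_ofReal (by simpa using hφ_le)

theorem logDensityIntegralGe_of_forall_integral_le_log_integral_exp_add
    [IsProbabilityMeasure μ] [IsProbabilityMeasure ν] {c : ℝ} (hC : 1 ≤ C) (hμν : μ ≪ ν)
    (hfC : ∀ᵐ x ∂ν, (μ.rnDeriv ν x).toReal ≤ C)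
    (hDV : ∀ φ : X → ℝ, Measurable φ → ∀ B, (∀ x, ‖φ x‖ ≤ B) →
      ∫ x, φ x ∂ν ≤ Real.log (∫ x, Real.exp (φ x) ∂μ) + c) :
    LogDensityIntegralGe C c μ ν := by
  set F : ℕ → X → ℝ≥0∞ := fun n x =>
    ENNReal.ofReal (Real.log C - Real.log (truncatedRnDeriv C μ ν n x)) with hF
  have hFm (n : ℕ) : Measurable (F n) :=
    (measurable_const.sub (measurable_truncatedRnDeriv n).log).ennreal_ofReal
  have hFmono : Monotone F := fun m n hmn x => ENNReal.ofReal_le_ofReal <| sub_le_sub_left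
    (Real.log_le_log (truncatedRnDeriv_pos n x) (truncatedRnDeriv_antitone x hmn)) _
  have hsup : ∫⁻ x, ⨆ n, F n x ∂ν ≤ ENNReal.ofReal (Real.log C + c) := by
    rw [lintegral_iSup hFm hFmono]
    exact iSup_le (lintegral_log_sub_log_truncatedRnDeriv_le hC hμν hfC hDV)
  -- where the density vanishes, `F n x = log C + n` is unbounded
  have hne : ∀ᵐ x ∂ν, (μ.rnDeriv ν x).toReal ≠ 0 := by
    filter_upwards [ae_lt_top (Measurable.iSup hFm) (hsup.trans_lt ENNReal.ofReal_lt_top).ne]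
      with x hx h0
    refine hx.ne (eq_top_iff.2 ?_)
    rw [← ENNReal.iSup_natCast]
    refine iSup_mono fun n => ?_
    simp only [hF]
    rw [truncatedRnDeriv_of_toReal_rnDeriv_eq_zero (by linarith) h0, Real.log_exp,
      ← ENNReal.ofReal_natCast]
    exact ENNReal.ofReal_le_ofReal (by linarith [Real.log_nonneg hC])
  refine ⟨hμν, hne.mono fun x hx h0 => hx (by simp [h0]), (lintegral_mono_ae ?_).trans hsup⟩
  filter_upwards [hne, hfC] with x h0 hxC
  have hpos : 0 < (μ.rnDeriv ν x).toReal := ENNReal.toReal_nonneg.lt_of_ne' h0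
  have hn : Real.exp (-⌈-Real.log (μ.rnDeriv ν x).toReal⌉₊) ≤ (μ.rnDeriv ν x).toReal :=
    (Real.exp_le_exp.2 (by linarith [Nat.le_ceil (-Real.log (μ.rnDeriv ν x).toReal)])).trans_eq
      (Real.exp_log hpos)
  refine le_iSup_of_le ⌈-Real.log (μ.rnDeriv ν x).toReal⌉₊ ?_
  simp only [hF]
  rw [truncatedRnDeriv_eq_toReal_rnDeriv hxC hn]
  rfl

theorem LogDensityIntegralGe.absolutelyContinuous_symm {c : ℝ} [SigmaFinite μ] [SigmaFinite ν]
    (h : LogDensityIntegralGe C c μ ν) : ν ≪ μ := by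
  rw [← Measure.withDensity_rnDeriv_eq μ ν h.1]
  exact withDensity_absolutelyContinuous' (μ.measurable_rnDeriv ν).aemeasurable h.2.1

end

theorem statement8 {X : Type*} [TopologicalSpace X] [PolishSpace X]
    [MeasurableSpace X] [BorelSpace X]
    (C c : ℝ) (hC : 1 ≤ C) (hc : 0 ≤ c)
    (μ ν : ℕ → ProbabilityMeasure X) (μlim νlim : ProbabilityMeasure X)
    (hμ : Tendsto μ atTop (nhds μlim)) (hν : Tendsto ν atTop (nhds νlim))
    (hle : ∀ n, ∀ A : Set X, MeasurableSet A →
      (μ n : Measure X) A ≤ ENNReal.ofReal C * (ν n : Measure X) A)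
    (hent : ∀ n, LogDensityIntegralGe C c (μ n : Measure X) (ν n : Measure X)) :
    LogDensityIntegralGe C c (μlim : Measure X) (νlim : Measure X) ∧
      (νlim : Measure X) ≪ (μlim : Measure X) := by
  have ha : (C.toNNReal : ℝ) = C := Real.coe_toNNReal C (by linarith)
  have hdom (n : ℕ) : (μ n : Measure X) ≤ C.toNNReal • (ν n : Measure X) :=
    Measure.le_iff.2 fun A hA => by simpa [ENNReal.ofReal] using hle n A hA
  have hdom_lim := ProbabilityMeasure.le_smul_of_tendsto hμ hν hdom
  have hCc : 0 ≤ Real.log C + c := by linarith [Real.log_nonneg hC]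
  have hDV (φ : X →ᵇ ℝ) := ProbabilityMeasure.integral_le_log_integral_exp_add_of_tendsto hμ hν φ
    fun n => (hent n).integral_le_log_integral_exp_add hCc
      (ha ▸ Measure.toReal_rnDeriv_le_of_le_smul (hdom n)) (φ.integrable _)
      (integrable_exp_of_norm_le φ.continuous.aestronglyMeasurable φ.norm_coe_le_norm)
  have hlim : LogDensityIntegralGe C c (μlim : Measure X) (νlim : Measure X) :=
    logDensityIntegralGe_of_forall_integral_le_log_integral_exp_add hC
      (Measure.absolutelyContinuous_of_le_smul hdom_lim)
      (ha ▸ Measure.toReal_rnDeriv_le_of_le_smul hdom_lim) fun φ hφ B hB =>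
        integral_le_log_integral_exp_add_of_forall_boundedContinuous hDV hφ hB
  exact ⟨hlim, hlim.absolutelyContinuous_symm⟩
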